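/- Let ν be a nonzero real number, α ∈ ℂ, and define h(z) = e^{αz}·(z + ν)/(ν·z) for z ∈ ℂ ∖ {0}. Then for every β > 0, every integer n ≥ 2 and every 1 ≤ k ≤ n−1, h satisfies the Ruijsenaars functional equation: S_{n,k}(h, β, x) = 0 for all x ∈ ℝⁿ with pairwise distinct coordinates. (This is the rational degeneration of the Ruijsenaars solution h(x) = b·σ(x+ν)e^{αx}/(σ(x)σ(ν)).) -/

import Mathlib

open Finset Polynomial

namespace RuijAux

noncomputable def Wf (ν g z : ℂ) : ℂ := (z + ν) * (z + g - ν) / (z * (z + g))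
noncomputable def outE (g d t : ℂ) : ℂ := (t - d) * (t - (d - g)) * (t - (d + g))
noncomputable def inE (ν g d t : ℂ) : ℂ := (t - (d - ν)) * (t - (d + ν - g)) * (t - (d + g))
noncomputable def inE' (ν g d t : ℂ) : ℂ := (t - (d + ν)) * (t - (d + g - ν)) * (t - (d - g))

variable {ν g c d t : ℂ}


lemma P1 (h0 : c - d ≠ 0) (h1 : c - d + g ≠ 0) :
    Wf ν g (c - d) * outE g d c = inE ν g d c := by
  unfold Wf outE inE
  field_simp
  ring

lemma P2 (h0 : d - c ≠ 0) (h1 : d - c + g ≠ 0) :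
    Wf ν g (d - c) * outE g d c = inE' ν g d c := by
  unfold Wf outE inE'
  field_simp
  ring

lemma P3 (h0 : d - c ≠ 0) (h1 : d - c + g ≠ 0) :
    Wf ν g (d - c) * outE g d (c - g) = inE ν g d (c - g) := by
  unfold Wf outE inE
  field_simp
  ring

lemma P4 (h0 : c - d ≠ 0) (h1 : c - d + g ≠ 0) :
    Wf ν g (c - d) * outE g d (c + g) = inE' ν g d (c + g) := by
  unfold Wf outE inE'
  field_simp
  ring

lemma outE_self : outE g d d = 0 := by unfold outE; ring

lemma outE_sub_g : outE g d (d - g) = 0 := by unfold outE; ring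

lemma outE_add_g : outE g d (d + g) = 0 := by unfold outE; ring

lemma inE_add_g : inE ν g d (d + g) = 0 := by unfold inE; ring

lemma inE'_sub_g : inE' ν g d (d - g) = 0 := by unfold inE'; ring

lemma inE_self_add_inE'_self : inE ν g d d + inE' ν g d d = 0 := by
  unfold inE inE'; ring


noncomputable def lin3 (a b c : ℂ) : ℂ[X] := (X - C a) * (X - C b) * (X - C c)

lemma lin3_monic (a b c : ℂ) : (lin3 a b c).Monic :=
  ((monic_X_sub_C a).mul (monic_X_sub_C b)).mul (monic_X_sub_C c)

lemma lin3_natDegree (a b c : ℂ) : (lin3 a b c).natDegree = 3 := by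
  unfold lin3
  rw [natDegree_mul (mul_ne_zero (X_sub_C_ne_zero a) (X_sub_C_ne_zero b)) (X_sub_C_ne_zero c),
    natDegree_mul (X_sub_C_ne_zero a) (X_sub_C_ne_zero b)]
  simp

lemma lin3_eval (a b c t : ℂ) : (lin3 a b c).eval t = (t - a) * (t - b) * (t - c) := by
  simp [lin3]

noncomputable def outP (g d : ℂ) : ℂ[X] := lin3 d (d - g) (d + g)
noncomputable def inP (ν g d : ℂ) : ℂ[X] := lin3 (d - ν) (d + ν - g) (d + g)
noncomputable def inP' (ν g d : ℂ) : ℂ[X] := lin3 (d + ν) (d + g - ν) (d - g)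

lemma outP_eval (g d t : ℂ) : (outP g d).eval t = outE g d t := lin3_eval ..
lemma inP_eval (ν g d t : ℂ) : (inP ν g d).eval t = inE ν g d t := lin3_eval ..
lemma inP'_eval (ν g d t : ℂ) : (inP' ν g d).eval t = inE' ν g d t := lin3_eval ..

variable {ι : Type*} [DecidableEq ι]

/-- The polynomial `M_I`. -/
noncomputable def Mp (ν g : ℂ) (x : ι → ℂ) (T I : Finset ι) : ℂ[X] :=
  (∏ i ∈ I, inP ν g (x i)) * ∏ j ∈ T \ I, outP g (x j)

/-- The polynomial `M'_I`. -/
noncomputable def Mp' (ν g : ℂ) (x : ι → ℂ) (T I : Finset ι) : ℂ[X] :=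
  (∏ j ∈ T \ I, inP' ν g (x j)) * ∏ i ∈ I, outP g (x i)

lemma Mp_monic (ν g : ℂ) (x : ι → ℂ) (T I : Finset ι) : (Mp ν g x T I).Monic :=
  (monic_prod_of_monic _ _ fun i _ => lin3_monic ..).mul
    (monic_prod_of_monic _ _ fun i _ => lin3_monic ..)

lemma Mp'_monic (ν g : ℂ) (x : ι → ℂ) (T I : Finset ι) : (Mp' ν g x T I).Monic :=
  (monic_prod_of_monic _ _ fun i _ => lin3_monic ..).mul
    (monic_prod_of_monic _ _ fun i _ => lin3_monic ..)

lemma Mp_natDegree (ν g : ℂ) (x : ι → ℂ) {T I : Finset ι} (h : I ⊆ T) :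
    (Mp ν g x T I).natDegree = 3 * T.card := by
  unfold Mp inP outP
  rw [(monic_prod_of_monic _ _ fun i _ => lin3_monic ..).natDegree_mul
      (monic_prod_of_monic _ _ fun i _ => lin3_monic ..),
    natDegree_prod _ _ (fun i _ => (lin3_monic ..).ne_zero),
    natDegree_prod _ _ (fun i _ => (lin3_monic ..).ne_zero)]
  simp only [lin3_natDegree, Finset.sum_const, smul_eq_mul]
  rw [card_sdiff_of_subset h]
  have := card_le_card h
  omega

lemma Mp'_natDegree (ν g : ℂ) (x : ι → ℂ) {T I : Finset ι} (h : I ⊆ T) :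
    (Mp' ν g x T I).natDegree = 3 * T.card := by
  unfold Mp' inP' outP
  rw [(monic_prod_of_monic _ _ fun i _ => lin3_monic ..).natDegree_mul
      (monic_prod_of_monic _ _ fun i _ => lin3_monic ..),
    natDegree_prod _ _ (fun i _ => (lin3_monic ..).ne_zero),
    natDegree_prod _ _ (fun i _ => (lin3_monic ..).ne_zero)]
  simp only [lin3_natDegree, Finset.sum_const, smul_eq_mul]
  rw [card_sdiff_of_subset h]
  have := card_le_card h
  omega

lemma Mp_eval (ν g : ℂ) (x : ι → ℂ) (T I : Finset ι) (t : ℂ) :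
    (Mp ν g x T I).eval t
      = (∏ i ∈ I, inE ν g (x i) t) * ∏ j ∈ T \ I, outE g (x j) t := by
  simp [Mp, eval_prod, inP_eval, outP_eval]

lemma Mp'_eval (ν g : ℂ) (x : ι → ℂ) (T I : Finset ι) (t : ℂ) :
    (Mp' ν g x T I).eval t
      = (∏ j ∈ T \ I, inE' ν g (x j) t) * ∏ i ∈ I, outE g (x i) t := by
  simp [Mp', eval_prod, inP'_eval, outP_eval]

/-- Splitting a sum over `powersetCard (j+1) (insert m E)`. -/
lemma sum_pc_insert {E : Finset ι} {m : ι} (hm : m ∉ E) (j : ℕ) (F : Finset ι → ℂ) :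
    ∑ I ∈ (insert m E).powersetCard (j+1), F I
      = (∑ I ∈ E.powersetCard (j+1), F I) + ∑ I ∈ E.powersetCard j, F (insert m I) := by
  rw [powersetCard_succ_insert hm, sum_union, sum_image]
  · intro I1 h1 I2 h2 h
    have hm1 : m ∉ I1 := fun hc => hm ((mem_powersetCard.1 h1).1 hc)
    have hm2 : m ∉ I2 := fun hc => hm ((mem_powersetCard.1 h2).1 hc)
    rw [← erase_insert hm1, h, erase_insert hm2]
  · rw [disjoint_left]
    intro I hI hI'
    have hmI : m ∉ I := fun hc => hm ((mem_powersetCard.1 hI).1 hc)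
    obtain ⟨J, hJ, rfl⟩ := mem_image.1 hI'
    exact hmI (mem_insert_self _ _)

/-- The coefficient `C_I` (product over cross pairs). -/
noncomputable def cC (ν g : ℂ) (x : ι → ℂ) (T I : Finset ι) : ℂ :=
  ∏ i ∈ I, ∏ j ∈ T \ I, Wf ν g (x j - x i)

noncomputable def Asum (ν g : ℂ) (x : ι → ℂ) (S : Finset ι) (k : ℕ) : ℂ :=
  ∑ I ∈ S.powersetCard k, cC ν g x S I

lemma Asum_zero (ν g : ℂ) (x : ι → ℂ) (S : Finset ι) : Asum ν g x S 0 = 1 := by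
  simp [Asum, powersetCard_zero, cC]

lemma Asum_card (ν g : ℂ) (x : ι → ℂ) (S : Finset ι) : Asum ν g x S S.card = 1 := by
  simp [Asum, powersetCard_self, cC]

lemma insert_sdiff_insert' {E I : Finset ι} {m : ι} (hm : m ∉ E) (hIE : I ⊆ E) :
    (insert m E) \ (insert m I) = E \ I := by
  ext y
  simp only [mem_sdiff, mem_insert, not_or]
  constructor
  · rintro ⟨hy1 | hy2, hy3, hy4⟩
    · exact absurd hy1 hy3
    · exact ⟨hy2, hy4⟩
  · rintro ⟨hy, hyI⟩
    exact ⟨Or.inr hy, fun h => hm (h ▸ hy), hyI⟩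

lemma cC_insert_notmem {E I : Finset ι} {m : ι} (ν g : ℂ) (x : ι → ℂ)
    (hm : m ∉ E) (hIE : I ⊆ E) :
    cC ν g x (insert m E) I = cC ν g x E I * ∏ i ∈ I, Wf ν g (x m - x i) := by
  unfold cC
  have h1 : (insert m E) \ I = insert m (E \ I) := insert_sdiff_of_notMem _ (fun h => hm (hIE h))
  have h2 : m ∉ E \ I := fun h => hm (mem_sdiff.1 h).1
  rw [h1]
  rw [← prod_mul_distrib]
  refine prod_congr rfl fun i _ => ?_
  rw [prod_insert h2, mul_comm]

lemma cC_insert_mem {E I : Finset ι} {m : ι} (ν g : ℂ) (x : ι → ℂ)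
    (hm : m ∉ E) (hIE : I ⊆ E) :
    cC ν g x (insert m E) (insert m I)
      = cC ν g x E I * ∏ j ∈ E \ I, Wf ν g (x j - x m) := by
  unfold cC
  have hmI : m ∉ I := fun h => hm (hIE h)
  rw [insert_sdiff_insert' hm hIE, prod_insert hmI, mul_comm]

variable {ι : Type*} [DecidableEq ι]

theorem Asum_symm (ν g : ℂ) (hg : g ≠ 0) (x : ι → ℂ) :
    ∀ (N : ℕ) (S : Finset ι), S.card = N →
      (∀ i ∈ S, ∀ j ∈ S, i ≠ j → x i - x j ≠ 0 ∧ x i - x j ≠ g ∧ x i - x j ≠ 2*g) →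
      ∀ k, k ≤ N → Asum ν g x S k = Asum ν g x S (N - k) := by
  intro N
  induction N using Nat.strong_induction_on with
  | _ N IH =>
  intro S hSc hsep k hkN
  rcases Nat.eq_zero_or_pos k with rfl | hk1
  · rw [Asum_zero, Nat.sub_zero, ← hSc, Asum_card]
  rcases eq_or_lt_of_le hkN with rfl | hklt
  · rw [Nat.sub_self, Asum_zero, ← hSc, Asum_card]
  -- main case : 1 ≤ k < N
  have hN2 : 2 ≤ N := by omega
  have hSne : S.Nonempty := by rw [← card_pos, hSc]; omega
  obtain ⟨a, ha⟩ := hSne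
  have haT : a ∉ S.erase a := notMem_erase a S
  have hST : S = insert a (S.erase a) := (insert_erase ha).symm
  set T := S.erase a with hTdef
  have hTc : T.card = N - 1 := by rw [hTdef, card_erase_of_mem ha, hSc]
  have hTS : T ⊆ S := erase_subset a S
  set l := N - k with hldef
  have hl1 : 1 ≤ l := by omega
  obtain ⟨k', hk'⟩ : ∃ k', k = k' + 1 := ⟨k - 1, by omega⟩
  obtain ⟨l', hl'⟩ : ∃ l', l = l' + 1 := ⟨l - 1, by omega⟩
  have hsepT : ∀ i ∈ T, ∀ j ∈ T, i ≠ j →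
      x i - x j ≠ 0 ∧ x i - x j ≠ g ∧ x i - x j ≠ 2*g :=
    fun i hi j hj hij => hsep i (hTS hi) j (hTS hj) hij
  have hne : ∀ i ∈ S, ∀ j ∈ S, i ≠ j → (x i - x j ≠ 0 ∧ x i - x j + g ≠ 0) := by
    intro i hi j hj hij
    refine ⟨(hsep i hi j hj hij).1, ?_⟩
    have h2 := (hsep j hj i hi hij.symm).2.1
    intro hc; apply h2; linear_combination -hc
  -- Claim A : relation between `Asum S` and the polynomial data, at `t = x a`
  have hQA : ∀ j : ℕ, (∏ m ∈ T, outE g (x m) (x a)) * Asum ν g x S (j+1)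
      = (∑ I ∈ T.powersetCard (j+1), cC ν g x T I * (Mp ν g x T I).eval (x a))
        + ∑ I ∈ T.powersetCard j, cC ν g x T I * (Mp' ν g x T I).eval (x a) := by
    intro j
    rw [Asum, hST, sum_pc_insert haT j, mul_add]
    congr 1
    · rw [mul_sum]
      refine sum_congr rfl fun I hI => ?_
      obtain ⟨hIT, hIc⟩ := mem_powersetCard.1 hI
      rw [cC_insert_notmem ν g x haT hIT, Mp_eval]
      have h5 : (∏ i ∈ I, Wf ν g (x a - x i)) * (∏ i ∈ I, outE g (x i) (x a))
          = ∏ i ∈ I, inE ν g (x i) (x a) := by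
        rw [← prod_mul_distrib]
        refine prod_congr rfl fun i hi => ?_
        have hia : a ≠ i := fun hc => haT (hc ▸ hIT hi)
        obtain ⟨e1, e2⟩ := hne a ha i (hTS (hIT hi)) hia
        exact P1 e1 e2
      rw [← prod_sdiff hIT (f := fun m => outE g (x m) (x a))]
      linear_combination (cC ν g x T I * ∏ j' ∈ T \ I, outE g (x j') (x a)) * h5
    · rw [mul_sum]
      refine sum_congr rfl fun I hI => ?_
      obtain ⟨hIT, hIc⟩ := mem_powersetCard.1 hI
      rw [cC_insert_mem ν g x haT hIT, Mp'_eval]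
      have h5 : (∏ j' ∈ T \ I, Wf ν g (x j' - x a)) * (∏ j' ∈ T \ I, outE g (x j') (x a))
          = ∏ j' ∈ T \ I, inE' ν g (x j') (x a) := by
        rw [← prod_mul_distrib]
        refine prod_congr rfl fun j' hj' => ?_
        have hjT : j' ∈ T := (mem_sdiff.1 hj').1
        have hja : j' ≠ a := fun hc => haT (hc ▸ hjT)
        obtain ⟨e1, e2⟩ := hne j' (hTS hjT) a ha hja
        exact P2 e1 e2
      rw [← prod_sdiff hIT (f := fun m => outE g (x m) (x a))]
      linear_combination (cC ν g x T I * ∏ i ∈ I, outE g (x i) (x a)) * h5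
  -- Claim B0 : vanishing at `x m`
  have hB0 : ∀ m ∈ T, ∀ j : ℕ,
      (∑ I ∈ T.powersetCard (j+1), cC ν g x T I * (Mp ν g x T I).eval (x m))
        + (∑ I ∈ T.powersetCard j, cC ν g x T I * (Mp' ν g x T I).eval (x m)) = 0 := by
    intro m hm j
    have hmE : m ∉ T.erase m := notMem_erase m T
    have hTE : T = insert m (T.erase m) := (insert_erase hm).symm
    set E := T.erase m with hEdef
    have hES : E ⊆ S := (erase_subset m T).trans hTS
    rw [hTE, sum_pc_insert hmE j]
    have hz1 : ∑ I ∈ E.powersetCard (j+1),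
        cC ν g x (insert m E) I * (Mp ν g x (insert m E) I).eval (x m) = 0 := by
      refine sum_eq_zero fun I hI => ?_
      obtain ⟨hIE, _⟩ := mem_powersetCard.1 hI
      have hmTI : m ∈ (insert m E) \ I :=
        mem_sdiff.2 ⟨mem_insert_self _ _, fun hc => hmE (hIE hc)⟩
      rw [Mp_eval, prod_eq_zero hmTI outE_self, mul_zero, mul_zero]
    have hsub : E.powersetCard j ⊆ (insert m E).powersetCard j :=
      powersetCard_mono (subset_insert m E)
    have hz2 : ∑ I ∈ (insert m E).powersetCard j,
          cC ν g x (insert m E) I * (Mp' ν g x (insert m E) I).eval (x m)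
        = ∑ I ∈ E.powersetCard j,
          cC ν g x (insert m E) I * (Mp' ν g x (insert m E) I).eval (x m) := by
      refine (sum_subset hsub fun I hI hIn => ?_).symm
      have hIT := (mem_powersetCard.1 hI).1
      have hmI : m ∈ I := by
        by_contra hmI
        exact hIn (mem_powersetCard.2 ⟨fun y hy =>
          mem_of_mem_insert_of_ne (hIT hy) (fun hc => hmI (hc ▸ hy)),
          (mem_powersetCard.1 hI).2⟩)
      rw [Mp'_eval, prod_eq_zero hmI outE_self, mul_zero, mul_zero]
    rw [hz1, zero_add, hz2, ← sum_add_distrib]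
    refine sum_eq_zero fun I hI => ?_
    obtain ⟨hIE, _⟩ := mem_powersetCard.1 hI
    have hmI : m ∉ I := fun hc => hmE (hIE hc)
    have hmEI : m ∉ E \ I := fun hc => hmE (mem_sdiff.1 hc).1
    have hTmE : (insert m E) \ I = insert m (E \ I) :=
      insert_sdiff_of_notMem _ (fun hc => hmE (hIE hc))
    rw [cC_insert_mem ν g x hmE hIE, cC_insert_notmem ν g x hmE hIE, Mp_eval, Mp'_eval,
      insert_sdiff_insert' hmE hIE, hTmE, prod_insert hmI, prod_insert hmEI]
    have h5 : (∏ j' ∈ E \ I, Wf ν g (x j' - x m)) * (∏ j' ∈ E \ I, outE g (x j') (x m))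
        = ∏ j' ∈ E \ I, inE' ν g (x j') (x m) := by
      rw [← prod_mul_distrib]
      refine prod_congr rfl fun j' hj' => ?_
      have hjE : j' ∈ E := (mem_sdiff.1 hj').1
      have hjm : j' ≠ m := fun hc => hmE (hc ▸ hjE)
      obtain ⟨e1, e2⟩ := hne j' (hES hjE) m (hTS hm) hjm
      exact P2 e1 e2
    have h6 : (∏ i ∈ I, Wf ν g (x m - x i)) * (∏ i ∈ I, outE g (x i) (x m))
        = ∏ i ∈ I, inE ν g (x i) (x m) := by
      rw [← prod_mul_distrib]
      refine prod_congr rfl fun i hi => ?_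
      have hiE : i ∈ E := hIE hi
      have him : m ≠ i := fun hc => hmE (hc ▸ hiE)
      obtain ⟨e1, e2⟩ := hne m (hTS hm) i (hES hiE) him
      exact P1 e1 e2
    have hc : inE ν g (x m) (x m) + inE' ν g (x m) (x m) = 0 := inE_self_add_inE'_self
    linear_combination
      (cC ν g x E I * inE ν g (x m) (x m) * ∏ i ∈ I, inE ν g (x i) (x m)) * h5
      + (cC ν g x E I * inE' ν g (x m) (x m) * ∏ j' ∈ E \ I, inE' ν g (x j') (x m)) * h6
      + (cC ν g x E I * (∏ i ∈ I, inE ν g (x i) (x m))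
          * ∏ j' ∈ E \ I, inE' ν g (x j') (x m)) * hc
  -- Claim B1 : value at `x m - g` for the `Mp`-sums
  have hB1 : ∀ m ∈ T, ∀ j : ℕ,
      (∑ I ∈ T.powersetCard (j+1), cC ν g x T I * (Mp ν g x T I).eval (x m - g))
        = inE ν g (x m) (x m - g) * (∏ p ∈ T.erase m, inE ν g (x p) (x m - g))
            * Asum ν g x (T.erase m) j := by
    intro m hm j
    have hmE : m ∉ T.erase m := notMem_erase m T
    have hTE : T = insert m (T.erase m) := (insert_erase hm).symm
    set E := T.erase m with hEdef
    have hES : E ⊆ S := (erase_subset m T).trans hTS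
    rw [hTE, sum_pc_insert hmE j]
    have hz1 : ∑ I ∈ E.powersetCard (j+1),
        cC ν g x (insert m E) I * (Mp ν g x (insert m E) I).eval (x m - g) = 0 := by
      refine sum_eq_zero fun I hI => ?_
      obtain ⟨hIE, _⟩ := mem_powersetCard.1 hI
      have hmTI : m ∈ (insert m E) \ I :=
        mem_sdiff.2 ⟨mem_insert_self _ _, fun hc => hmE (hIE hc)⟩
      rw [Mp_eval, prod_eq_zero hmTI outE_sub_g, mul_zero, mul_zero]
    rw [hz1, zero_add, Asum, mul_sum]
    refine sum_congr rfl fun I hI => ?_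
    obtain ⟨hIE, _⟩ := mem_powersetCard.1 hI
    have hmI : m ∉ I := fun hc => hmE (hIE hc)
    rw [cC_insert_mem ν g x hmE hIE, Mp_eval, insert_sdiff_insert' hmE hIE,
      prod_insert hmI]
    have h5 : (∏ j' ∈ E \ I, Wf ν g (x j' - x m)) * (∏ j' ∈ E \ I, outE g (x j') (x m - g))
        = ∏ j' ∈ E \ I, inE ν g (x j') (x m - g) := by
      rw [← prod_mul_distrib]
      refine prod_congr rfl fun j' hj' => ?_
      have hjE : j' ∈ E := (mem_sdiff.1 hj').1
      have hjm : j' ≠ m := fun hc => hmE (hc ▸ hjE)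
      obtain ⟨e1, e2⟩ := hne j' (hES hjE) m (hTS hm) hjm
      exact P3 e1 e2
    have h7 : (∏ j' ∈ E \ I, inE ν g (x j') (x m - g)) * (∏ i ∈ I, inE ν g (x i) (x m - g))
        = ∏ p ∈ E, inE ν g (x p) (x m - g) := prod_sdiff hIE
    linear_combination
      (cC ν g x E I * inE ν g (x m) (x m - g) * ∏ i ∈ I, inE ν g (x i) (x m - g)) * h5
      + (cC ν g x E I * inE ν g (x m) (x m - g)) * h7
  -- Claim B1' : the `Mp'`-sums vanish at `x m - g`
  have hB1' : ∀ m ∈ T, ∀ j : ℕ,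
      (∑ I ∈ T.powersetCard j, cC ν g x T I * (Mp' ν g x T I).eval (x m - g)) = 0 := by
    intro m hm j
    refine sum_eq_zero fun I hI => ?_
    by_cases hmI : m ∈ I
    · rw [Mp'_eval, prod_eq_zero hmI outE_sub_g, mul_zero, mul_zero]
    · have hmTI : m ∈ T \ I := mem_sdiff.2 ⟨hm, hmI⟩
      rw [Mp'_eval, prod_eq_zero hmTI inE'_sub_g, zero_mul, mul_zero]
  -- Claim B2 : the `Mp`-sums vanish at `x m + g`
  have hB2 : ∀ m ∈ T, ∀ j : ℕ,
      (∑ I ∈ T.powersetCard j, cC ν g x T I * (Mp ν g x T I).eval (x m + g)) = 0 := by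
    intro m hm j
    refine sum_eq_zero fun I hI => ?_
    by_cases hmI : m ∈ I
    · rw [Mp_eval, prod_eq_zero hmI inE_add_g, zero_mul, mul_zero]
    · have hmTI : m ∈ T \ I := mem_sdiff.2 ⟨hm, hmI⟩
      rw [Mp_eval, prod_eq_zero hmTI outE_add_g, mul_zero, mul_zero]
  -- Claim B2' : value at `x m + g` for the `Mp'`-sums
  have hB2' : ∀ m ∈ T, ∀ j : ℕ,
      (∑ I ∈ T.powersetCard j, cC ν g x T I * (Mp' ν g x T I).eval (x m + g))
        = inE' ν g (x m) (x m + g) * (∏ p ∈ T.erase m, inE' ν g (x p) (x m + g))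
            * Asum ν g x (T.erase m) j := by
    intro m hm j
    have hmE : m ∉ T.erase m := notMem_erase m T
    have hTE : T = insert m (T.erase m) := (insert_erase hm).symm
    set E := T.erase m with hEdef
    have hES : E ⊆ S := (erase_subset m T).trans hTS
    have hsub : E.powersetCard j ⊆ T.powersetCard j :=
      powersetCard_mono (erase_subset m T)
    have hz2 : ∑ I ∈ T.powersetCard j, cC ν g x T I * (Mp' ν g x T I).eval (x m + g)
        = ∑ I ∈ E.powersetCard j, cC ν g x T I * (Mp' ν g x T I).eval (x m + g) := by
      refine (sum_subset hsub fun I hI hIn => ?_).symm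
      have hIT := (mem_powersetCard.1 hI).1
      have hmI : m ∈ I := by
        by_contra hmI
        exact hIn (mem_powersetCard.2 ⟨fun y hy =>
          mem_erase.2 ⟨fun hc => hmI (hc ▸ hy), hIT hy⟩, (mem_powersetCard.1 hI).2⟩)
      rw [Mp'_eval, prod_eq_zero hmI outE_add_g, mul_zero, mul_zero]
    rw [hz2, Asum, mul_sum]
    refine sum_congr rfl fun I hI => ?_
    obtain ⟨hIE, _⟩ := mem_powersetCard.1 hI
    have hmEI : m ∉ E \ I := fun hc => hmE (mem_sdiff.1 hc).1
    have hTmE : T \ I = insert m (E \ I) := by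
      rw [hTE]; exact insert_sdiff_of_notMem _ (fun hc => hmE (hIE hc))
    rw [show cC ν g x T I = cC ν g x (insert m E) I from by rw [← hTE],
      cC_insert_notmem ν g x hmE hIE, Mp'_eval, hTmE, prod_insert hmEI]
    have h5 : (∏ i ∈ I, Wf ν g (x m - x i)) * (∏ i ∈ I, outE g (x i) (x m + g))
        = ∏ i ∈ I, inE' ν g (x i) (x m + g) := by
      rw [← prod_mul_distrib]
      refine prod_congr rfl fun i hi => ?_
      have hiE : i ∈ E := hIE hi
      have him : m ≠ i := fun hc => hmE (hc ▸ hiE)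
      obtain ⟨e1, e2⟩ := hne m (hTS hm) i (hES hiE) him
      exact P4 e1 e2
    have h7 : (∏ j' ∈ E \ I, inE' ν g (x j') (x m + g)) * (∏ i ∈ I, inE' ν g (x i) (x m + g))
        = ∏ p ∈ E, inE' ν g (x p) (x m + g) := prod_sdiff hIE
    linear_combination
      (cC ν g x E I * inE' ν g (x m) (x m + g) * ∏ j' ∈ E \ I, inE' ν g (x j') (x m + g)) * h5
      + (cC ν g x E I * inE' ν g (x m) (x m + g)) * h7
  -- the polynomial Φ
  set D := 3 * T.card with hDdef
  set Φ : Polynomial ℂ :=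
    ((∑ I ∈ T.powersetCard (k'+1), Polynomial.C (cC ν g x T I) * Mp ν g x T I)
      + ∑ I ∈ T.powersetCard k', Polynomial.C (cC ν g x T I) * Mp' ν g x T I)
    - ((∑ I ∈ T.powersetCard (l'+1), Polynomial.C (cC ν g x T I) * Mp ν g x T I)
      + ∑ I ∈ T.powersetCard l', Polynomial.C (cC ν g x T I) * Mp' ν g x T I) with hPhidef
  have hPhieval : ∀ t : ℂ, Φ.eval t
      = ((∑ I ∈ T.powersetCard (k'+1), cC ν g x T I * (Mp ν g x T I).eval t)
          + ∑ I ∈ T.powersetCard k', cC ν g x T I * (Mp' ν g x T I).eval t)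
        - ((∑ I ∈ T.powersetCard (l'+1), cC ν g x T I * (Mp ν g x T I).eval t)
          + ∑ I ∈ T.powersetCard l', cC ν g x T I * (Mp' ν g x T I).eval t) := by
    intro t
    simp [hPhidef, eval_finset_sum]
  -- IH instances at T
  have hIH1 : Asum ν g x T (k'+1) = Asum ν g x T l' := by
    have h := IH (N-1) (by omega) T hTc hsepT (k'+1) (by omega)
    have he : (N-1) - (k'+1) = l' := by omega
    rwa [he] at h
  have hIH2 : Asum ν g x T k' = Asum ν g x T (l'+1) := by
    have h := IH (N-1) (by omega) T hTc hsepT k' (by omega)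
    have he : (N-1) - k' = l' + 1 := by omega
    rwa [he] at h
  -- degree bound
  have hsplit : ∀ (j : ℕ) (P : Finset ι → Polynomial ℂ),
      (∑ I ∈ T.powersetCard j, Polynomial.C (cC ν g x T I) * P I)
      = (∑ I ∈ T.powersetCard j, Polynomial.C (cC ν g x T I) * (P I - X^D))
        + Polynomial.C (Asum ν g x T j) * X^D := by
    intro j P
    have hC : Polynomial.C (Asum ν g x T j)
        = ∑ I ∈ T.powersetCard j, Polynomial.C (cC ν g x T I) := by
      rw [Asum, map_sum]
    rw [hC, sum_mul, ← sum_add_distrib]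
    refine sum_congr rfl fun I _ => by ring
  have hlowdeg : ∀ (j : ℕ) (P : Finset ι → Polynomial ℂ),
      (∀ I ∈ T.powersetCard j, P I ∈ degreeLT ℂ D) →
      (∑ I ∈ T.powersetCard j, Polynomial.C (cC ν g x T I) * P I) ∈ degreeLT ℂ D := by
    intro j P hP
    refine Submodule.sum_mem _ fun I hI => ?_
    rw [mem_degreeLT]
    calc (Polynomial.C (cC ν g x T I) * P I).degree
        ≤ (Polynomial.C (cC ν g x T I)).degree + (P I).degree := degree_mul_le _ _
      _ ≤ 0 + (P I).degree := add_le_add degree_C_le le_rfl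
      _ = (P I).degree := by rw [zero_add]
      _ < D := mem_degreeLT.1 (hP I hI)
  have hsubdeg : ∀ (I : Finset ι), I ⊆ T → (Mp ν g x T I - X^D) ∈ degreeLT ℂ D := by
    intro I hIT
    rw [mem_degreeLT]
    refine degree_sub_lt ?_ (Mp_monic ν g x T I).ne_zero ?_ |>.trans_le ?_
    · rw [degree_eq_natDegree (Mp_monic ν g x T I).ne_zero, Mp_natDegree ν g x hIT,
        degree_X_pow]
    · rw [(Mp_monic ν g x T I).leadingCoeff, monic_X_pow D |>.leadingCoeff]
    · rw [degree_eq_natDegree (Mp_monic ν g x T I).ne_zero, Mp_natDegree ν g x hIT]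
  have hsubdeg' : ∀ (I : Finset ι), I ⊆ T → (Mp' ν g x T I - X^D) ∈ degreeLT ℂ D := by
    intro I hIT
    rw [mem_degreeLT]
    refine degree_sub_lt ?_ (Mp'_monic ν g x T I).ne_zero ?_ |>.trans_le ?_
    · rw [degree_eq_natDegree (Mp'_monic ν g x T I).ne_zero, Mp'_natDegree ν g x hIT,
        degree_X_pow]
    · rw [(Mp'_monic ν g x T I).leadingCoeff, monic_X_pow D |>.leadingCoeff]
    · rw [degree_eq_natDegree (Mp'_monic ν g x T I).ne_zero, Mp'_natDegree ν g x hIT]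
  have hPhideg : Φ.degree < (D : ℕ) := by
    have hPhieq : Φ =
        ((∑ I ∈ T.powersetCard (k'+1), Polynomial.C (cC ν g x T I) * (Mp ν g x T I - X^D))
          + ∑ I ∈ T.powersetCard k', Polynomial.C (cC ν g x T I) * (Mp' ν g x T I - X^D))
        - ((∑ I ∈ T.powersetCard (l'+1), Polynomial.C (cC ν g x T I) * (Mp ν g x T I - X^D))
          + ∑ I ∈ T.powersetCard l', Polynomial.C (cC ν g x T I) * (Mp' ν g x T I - X^D)) := by
      rw [hPhidef, hsplit (k'+1) (fun I => Mp ν g x T I),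
        hsplit k' (fun I => Mp' ν g x T I),
        hsplit (l'+1) (fun I => Mp ν g x T I),
        hsplit l' (fun I => Mp' ν g x T I), hIH1, hIH2]
      ring
    rw [← mem_degreeLT, hPhieq]
    refine Submodule.sub_mem _ (Submodule.add_mem _ ?_ ?_) (Submodule.add_mem _ ?_ ?_)
    · exact hlowdeg _ _ fun I hI => hsubdeg I (mem_powersetCard.1 hI).1
    · exact hlowdeg _ _ fun I hI => hsubdeg' I (mem_powersetCard.1 hI).1
    · exact hlowdeg _ _ fun I hI => hsubdeg I (mem_powersetCard.1 hI).1
    · exact hlowdeg _ _ fun I hI => hsubdeg' I (mem_powersetCard.1 hI).1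
  -- roots
  have hroot0 : ∀ m ∈ T, Φ.eval (x m) = 0 := by
    intro m hm
    rw [hPhieval, hB0 m hm k', hB0 m hm l']
    ring
  have hroot1 : ∀ m ∈ T, Φ.eval (x m - g) = 0 := by
    intro m hm
    have hEc : (T.erase m).card = N - 2 := by
      rw [card_erase_of_mem hm, hTc]; omega
    have hsepE : ∀ i ∈ T.erase m, ∀ j ∈ T.erase m, i ≠ j →
        x i - x j ≠ 0 ∧ x i - x j ≠ g ∧ x i - x j ≠ 2*g :=
      fun i hi j hj hij => hsepT i (erase_subset m T hi) j (erase_subset m T hj) hij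
    have hE := IH (N-2) (by omega) (T.erase m) hEc hsepE k' (by omega)
    have he : (N-2) - k' = l' := by omega
    rw [he] at hE
    rw [hPhieval, hB1 m hm k', hB1 m hm l', hB1' m hm k', hB1' m hm l', hE]
    ring
  have hroot2 : ∀ m ∈ T, Φ.eval (x m + g) = 0 := by
    intro m hm
    have hEc : (T.erase m).card = N - 2 := by
      rw [card_erase_of_mem hm, hTc]; omega
    have hsepE : ∀ i ∈ T.erase m, ∀ j ∈ T.erase m, i ≠ j →
        x i - x j ≠ 0 ∧ x i - x j ≠ g ∧ x i - x j ≠ 2*g :=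
      fun i hi j hj hij => hsepT i (erase_subset m T hi) j (erase_subset m T hj) hij
    have hE := IH (N-2) (by omega) (T.erase m) hEc hsepE k' (by omega)
    have he : (N-2) - k' = l' := by omega
    rw [he] at hE
    rw [hPhieval, hB2 m hm (k'+1), hB2 m hm (l'+1), hB2' m hm k', hB2' m hm l', hE]
    ring
  -- Φ = 0
  have hPhi0 : Φ = 0 := by
    by_contra hPhine
    have hinj0 : Set.InjOn x ↑T := by
      intro i hi j hj hxe
      by_contra hij
      exact (hsep i (hTS hi) j (hTS hj) hij).1 (sub_eq_zero.2 hxe)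
    have hinj1 : Set.InjOn (fun m => x m - g) ↑T := by
      intro i hi j hj hxe
      by_contra hij
      exact (hsep i (hTS hi) j (hTS hj) hij).1
        (by simp only at hxe; linear_combination hxe)
    have hinj2 : Set.InjOn (fun m => x m + g) ↑T := by
      intro i hi j hj hxe
      by_contra hij
      exact (hsep i (hTS hi) j (hTS hj) hij).1
        (by simp only at hxe; linear_combination hxe)
    have hd1 : Disjoint (T.image x) (T.image (fun m => x m - g)) := by
      rw [disjoint_left]
      rintro v hv1 hv2
      obtain ⟨i, hi, rfl⟩ := mem_image.1 hv1
      obtain ⟨j, hj, hji⟩ := mem_image.1 hv2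
      by_cases hij : j = i
      · subst hij; exact hg (by linear_combination -hji)
      · exact (hsep j (hTS hj) i (hTS hi) hij).2.1 (by linear_combination hji)
    have hd2 : Disjoint (T.image x ∪ T.image (fun m => x m - g))
        (T.image (fun m => x m + g)) := by
      rw [disjoint_left]
      rintro v hv1 hv2
      obtain ⟨j, hj, hji⟩ := mem_image.1 hv2
      rcases mem_union.1 hv1 with hv1 | hv1
      · obtain ⟨i, hi, rfl⟩ := mem_image.1 hv1
        by_cases hij : i = j
        · subst hij; exact hg (by linear_combination hji)
        · exact (hsep i (hTS hi) j (hTS hj) hij).2.1 (by linear_combination - hji)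
      · obtain ⟨i, hi, hiv⟩ := mem_image.1 hv1
        by_cases hij : i = j
        · subst hij
          have h2 : (2 : ℂ) ≠ 0 := two_ne_zero
          apply hg
          have : (2:ℂ) * g = 0 := by linear_combination hji - hiv
          rcases mul_eq_zero.1 this with h | h
          · exact absurd h h2
          · exact h
        · exact (hsep i (hTS hi) j (hTS hj) hij).2.2
            (by linear_combination hiv - hji)
    set Z : Finset ℂ := (T.image x ∪ T.image (fun m => x m - g)) ∪ T.image (fun m => x m + g)
      with hZdef
    have hZcard : Z.card = 3 * T.card := by
      rw [hZdef, card_union_of_disjoint hd2, card_union_of_disjoint hd1,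
        card_image_of_injOn hinj0, card_image_of_injOn hinj1, card_image_of_injOn hinj2]
      ring
    have hZroots : Z.val ⊆ Φ.roots := by
      intro z hz
      have hzZ : z ∈ Z := hz
      rw [mem_roots']
      refine ⟨hPhine, ?_⟩
      rcases mem_union.1 hzZ with hz1 | hz1
      · rcases mem_union.1 hz1 with hz2 | hz2
        · obtain ⟨m, hm, rfl⟩ := mem_image.1 hz2
          exact hroot0 m hm
        · obtain ⟨m, hm, rfl⟩ := mem_image.1 hz2
          exact hroot1 m hm
      · obtain ⟨m, hm, rfl⟩ := mem_image.1 hz1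
        exact hroot2 m hm
    have hle := card_le_degree_of_subset_roots hZroots
    have hlt : Φ.natDegree < D := (natDegree_lt_iff_degree_lt hPhine).2 hPhideg
    omega
  -- conclusion
  have hQ : (∏ m ∈ T, outE g (x m) (x a)) ≠ 0 := by
    rw [prod_ne_zero_iff]
    intro m hm
    have ham : a ≠ m := fun hc => haT (hc ▸ hm)
    obtain ⟨e1, e2⟩ := hne a ha m (hTS hm) ham
    have e3 : x a - x m ≠ g := (hsep a ha m (hTS hm) ham).2.1
    unfold outE
    refine mul_ne_zero (mul_ne_zero e1 ?_) ?_
    · intro hc; apply e2; linear_combination hc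
    · intro hc; apply e3; linear_combination hc
  have hfin : (∏ m ∈ T, outE g (x m) (x a)) * Asum ν g x S k
      = (∏ m ∈ T, outE g (x m) (x a)) * Asum ν g x S l := by
    rw [hk', hl', hQA k', hQA l']
    have h0 : Φ.eval (x a) = 0 := by rw [hPhi0]; simp
    rw [hPhieval (x a)] at h0
    linear_combination h0
  exact mul_left_cancel₀ hQ hfin

lemma real_ne_I_mul (r b : ℝ) (hb : b ≠ 0) : (r : ℂ) ≠ Complex.I * (b : ℂ) := by
  intro h
  have him := congrArg Complex.im h
  simp [Complex.mul_im] at him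
  exact hb him.symm

lemma pair_eq (ν α g z : ℂ) (hν : ν ≠ 0) (h0 : z ≠ 0) (h1 : z + g ≠ 0) :
    (Complex.exp (α * z) * (z + ν) / (ν * z))
      * (Complex.exp (α * (-z - g)) * ((-z - g) + ν) / (ν * (-z - g)))
    = (Complex.exp (α * -g) / (ν * ν)) * Wf ν g z := by
  have h2 : -z - g ≠ 0 := fun hc => h1 (by linear_combination -hc)
  have hexp : Complex.exp (α * z) * Complex.exp (α * (-z - g)) = Complex.exp (α * -g) := by
    rw [← Complex.exp_add]; congr 1; ring
  rw [Wf]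
  generalize hq1 : Complex.exp (α * z) = E1 at *
  generalize hq2 : Complex.exp (α * (-z - g)) = E2 at *
  generalize hq3 : Complex.exp (α * -g) = E3 at *
  rw [div_mul_div_comm, div_mul_div_comm,
    div_eq_div_iff (mul_ne_zero (mul_ne_zero hν h0) (mul_ne_zero hν h2))
      (mul_ne_zero (mul_ne_zero hν hν) (mul_ne_zero h0 h1))]
  linear_combination ((z + ν) * (-z - g + ν) * (z * (z + g)) * (ν * ν)) * hexp

end RuijAux

/-- The Ruijsenaars sum `S_{n,k}(h, β, x)`. -/
noncomputable def ruijSum (h : ℂ → ℂ) (n k : ℕ) (β : ℝ) (x : Fin n → ℝ) : ℂ :=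
  ∑ I ∈ Finset.powersetCard k (Finset.univ : Finset (Fin n)),
    ((∏ i ∈ I, ∏ j ∈ Iᶜ, h ((x j : ℂ) - (x i : ℂ)) *
        h ((x i : ℂ) - (x j : ℂ) - Complex.I * (β : ℂ))) -
     (∏ i ∈ I, ∏ j ∈ Iᶜ, h ((x i : ℂ) - (x j : ℂ)) *
        h ((x j : ℂ) - (x i : ℂ) - Complex.I * (β : ℂ))))

/-- The rational degeneration `h(z) = e^{αz}(z + ν)/(νz)` of the Ruijsenaars
solution satisfies the Ruijsenaars functional equation for every `β > 0`,
`n ≥ 2` and `1 ≤ k ≤ n − 1`. -/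
theorem ruijsenaars_eq_rational (ν : ℝ) (hν : ν ≠ 0) (α : ℂ) (β : ℝ) (hβ : 0 < β)
    (n k : ℕ) (hn : 2 ≤ n) (hk1 : 1 ≤ k) (hk2 : k ≤ n - 1) :
    ∀ x : Fin n → ℝ, Function.Injective x →
      ruijSum (fun z => Complex.exp (α * z) * (z + (ν : ℂ)) / ((ν : ℂ) * z))
        n k β x = 0 := by
  intro x hinj
  classical
  set g : ℂ := Complex.I * (β : ℂ) with hgdef
  have hβ' : (β : ℂ) ≠ 0 := by exact_mod_cast hβ.ne'
  have hg : g ≠ 0 := mul_ne_zero Complex.I_ne_zero hβ'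
  have hνc : (ν : ℂ) ≠ 0 := by exact_mod_cast hν
  set xf : Fin n → ℂ := fun i => (x i : ℂ) with hxf
  -- separation conditions
  have hsep : ∀ i ∈ (Finset.univ : Finset (Fin n)), ∀ j ∈ (Finset.univ : Finset (Fin n)),
      i ≠ j → xf i - xf j ≠ 0 ∧ xf i - xf j ≠ g ∧ xf i - xf j ≠ 2*g := by
    intro i _ j _ hij
    refine ⟨?_, ?_, ?_⟩
    · intro hc
      apply hij
      apply hinj
      have : ((x i : ℂ)) = ((x j : ℂ)) := by linear_combination hc
      exact_mod_cast this
    · intro hc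
      have h1 : ((x i - x j : ℝ) : ℂ) = Complex.I * ((β : ℝ) : ℂ) := by
        push_cast
        linear_combination hc
      exact RuijAux.real_ne_I_mul _ _ hβ.ne' h1
    · intro hc
      have h1 : ((x i - x j : ℝ) : ℂ) = Complex.I * ((2*β : ℝ) : ℂ) := by
        push_cast
        linear_combination hc
      exact RuijAux.real_ne_I_mul _ _ (by positivity) h1
  have hcard : (Finset.univ : Finset (Fin n)).card = n := by
    rw [Finset.card_univ, Fintype.card_fin]
  have hmain : RuijAux.Asum (ν : ℂ) g xf Finset.univ k
      = RuijAux.Asum (ν : ℂ) g xf Finset.univ (n - k) :=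
    RuijAux.Asum_symm (ν : ℂ) g hg xf n Finset.univ hcard hsep k (by omega)
  set c : ℂ := Complex.exp (α * -g) / ((ν : ℂ) * (ν : ℂ)) with hcdef
  set e : ℂ := c ^ ((n - k) * k) with hedef
  -- rewrite each term of the Ruijsenaars sum
  have hWterm : ∀ I ∈ Finset.powersetCard k (Finset.univ : Finset (Fin n)),
      (∏ i ∈ I, ∏ j ∈ Iᶜ,
        (fun z => Complex.exp (α * z) * (z + (ν : ℂ)) / ((ν : ℂ) * z)) ((x j : ℂ) - (x i : ℂ)) *
        (fun z => Complex.exp (α * z) * (z + (ν : ℂ)) / ((ν : ℂ) * z))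
          ((x i : ℂ) - (x j : ℂ) - Complex.I * (β : ℂ)))
      = e * ∏ i ∈ I, ∏ j ∈ Finset.univ \ I, RuijAux.Wf (ν : ℂ) g (xf j - xf i) := by
    intro I hI
    have hIcard : I.card = k := Finset.mem_powersetCard_univ.1 hI
    have hIc : Iᶜ.card = n - k := by
      rw [Finset.card_compl, hIcard, Fintype.card_fin]
    have hstep : ∀ i ∈ I, ∀ j ∈ Iᶜ,
        (Complex.exp (α * ((x j : ℂ) - (x i : ℂ))) * (((x j : ℂ) - (x i : ℂ)) + (ν : ℂ))
            / ((ν : ℂ) * ((x j : ℂ) - (x i : ℂ))))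
          * (Complex.exp (α * ((x i : ℂ) - (x j : ℂ) - Complex.I * (β : ℂ)))
              * (((x i : ℂ) - (x j : ℂ) - Complex.I * (β : ℂ)) + (ν : ℂ))
            / ((ν : ℂ) * ((x i : ℂ) - (x j : ℂ) - Complex.I * (β : ℂ))))
        = c * RuijAux.Wf (ν : ℂ) g (xf j - xf i) := by
      intro i hiI j hjI
      have hij : j ≠ i := fun hc => (Finset.mem_compl.1 hjI) (hc ▸ hiI)
      have e1 : xf j - xf i ≠ 0 := (hsep j (Finset.mem_univ j) i (Finset.mem_univ i) hij).1
      have e2 : xf j - xf i + g ≠ 0 := by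
        have h2 := (hsep i (Finset.mem_univ i) j (Finset.mem_univ j) (fun hc => hij hc.symm)).2.1
        intro hcc; apply h2; linear_combination -hcc
      have harg : (x i : ℂ) - (x j : ℂ) - Complex.I * (β : ℂ) = -(xf j - xf i) - g := by
        rw [hgdef, hxf]; ring
      rw [harg]
      have hz1 : (x j : ℂ) - (x i : ℂ) = xf j - xf i := rfl
      rw [hz1]
      exact RuijAux.pair_eq (ν : ℂ) α g (xf j - xf i) hνc e1 e2
    calc (∏ i ∈ I, ∏ j ∈ Iᶜ,
        (fun z => Complex.exp (α * z) * (z + (ν : ℂ)) / ((ν : ℂ) * z)) ((x j : ℂ) - (x i : ℂ)) *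
        (fun z => Complex.exp (α * z) * (z + (ν : ℂ)) / ((ν : ℂ) * z))
          ((x i : ℂ) - (x j : ℂ) - Complex.I * (β : ℂ)))
        = ∏ i ∈ I, ∏ j ∈ Iᶜ, c * RuijAux.Wf (ν : ℂ) g (xf j - xf i) :=
          Finset.prod_congr rfl fun i hi => Finset.prod_congr rfl fun j hj =>
            hstep i hi j hj
      _ = ∏ i ∈ I, (c ^ Iᶜ.card * ∏ j ∈ Iᶜ, RuijAux.Wf (ν : ℂ) g (xf j - xf i)) :=
          Finset.prod_congr rfl fun i _ => by
            rw [Finset.prod_mul_distrib, Finset.prod_const]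
      _ = (c ^ Iᶜ.card) ^ I.card * ∏ i ∈ I, ∏ j ∈ Iᶜ, RuijAux.Wf (ν : ℂ) g (xf j - xf i) := by
          rw [Finset.prod_mul_distrib, Finset.prod_const]
      _ = e * ∏ i ∈ I, ∏ j ∈ Finset.univ \ I, RuijAux.Wf (ν : ℂ) g (xf j - xf i) := by
          rw [hIc, hIcard, ← pow_mul, hedef, Finset.compl_eq_univ_sdiff]
  have hWterm' : ∀ I ∈ Finset.powersetCard k (Finset.univ : Finset (Fin n)),
      (∏ i ∈ I, ∏ j ∈ Iᶜ,
        (fun z => Complex.exp (α * z) * (z + (ν : ℂ)) / ((ν : ℂ) * z)) ((x i : ℂ) - (x j : ℂ)) *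
        (fun z => Complex.exp (α * z) * (z + (ν : ℂ)) / ((ν : ℂ) * z))
          ((x j : ℂ) - (x i : ℂ) - Complex.I * (β : ℂ)))
      = e * ∏ i ∈ I, ∏ j ∈ Iᶜ, RuijAux.Wf (ν : ℂ) g (xf i - xf j) := by
    intro I hI
    have hIcard : I.card = k := Finset.mem_powersetCard_univ.1 hI
    have hIc : Iᶜ.card = n - k := by
      rw [Finset.card_compl, hIcard, Fintype.card_fin]
    have hstep : ∀ i ∈ I, ∀ j ∈ Iᶜ,
        (Complex.exp (α * ((x i : ℂ) - (x j : ℂ))) * (((x i : ℂ) - (x j : ℂ)) + (ν : ℂ))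
            / ((ν : ℂ) * ((x i : ℂ) - (x j : ℂ))))
          * (Complex.exp (α * ((x j : ℂ) - (x i : ℂ) - Complex.I * (β : ℂ)))
              * (((x j : ℂ) - (x i : ℂ) - Complex.I * (β : ℂ)) + (ν : ℂ))
            / ((ν : ℂ) * ((x j : ℂ) - (x i : ℂ) - Complex.I * (β : ℂ))))
        = c * RuijAux.Wf (ν : ℂ) g (xf i - xf j) := by
      intro i hiI j hjI
      have hij : i ≠ j := fun hc => (Finset.mem_compl.1 hjI) (hc ▸ hiI)
      have e1 : xf i - xf j ≠ 0 := (hsep i (Finset.mem_univ i) j (Finset.mem_univ j) hij).1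
      have e2 : xf i - xf j + g ≠ 0 := by
        have h2 := (hsep j (Finset.mem_univ j) i (Finset.mem_univ i) hij.symm).2.1
        intro hcc; apply h2; linear_combination -hcc
      have harg : (x j : ℂ) - (x i : ℂ) - Complex.I * (β : ℂ) = -(xf i - xf j) - g := by
        rw [hgdef, hxf]; ring
      rw [harg]
      have hz1 : (x i : ℂ) - (x j : ℂ) = xf i - xf j := rfl
      rw [hz1]
      exact RuijAux.pair_eq (ν : ℂ) α g (xf i - xf j) hνc e1 e2
    calc (∏ i ∈ I, ∏ j ∈ Iᶜ,
        (fun z => Complex.exp (α * z) * (z + (ν : ℂ)) / ((ν : ℂ) * z)) ((x i : ℂ) - (x j : ℂ)) *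
        (fun z => Complex.exp (α * z) * (z + (ν : ℂ)) / ((ν : ℂ) * z))
          ((x j : ℂ) - (x i : ℂ) - Complex.I * (β : ℂ)))
        = ∏ i ∈ I, ∏ j ∈ Iᶜ, c * RuijAux.Wf (ν : ℂ) g (xf i - xf j) :=
          Finset.prod_congr rfl fun i hi => Finset.prod_congr rfl fun j hj =>
            hstep i hi j hj
      _ = ∏ i ∈ I, (c ^ Iᶜ.card * ∏ j ∈ Iᶜ, RuijAux.Wf (ν : ℂ) g (xf i - xf j)) :=
          Finset.prod_congr rfl fun i _ => by
            rw [Finset.prod_mul_distrib, Finset.prod_const]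
      _ = (c ^ Iᶜ.card) ^ I.card * ∏ i ∈ I, ∏ j ∈ Iᶜ, RuijAux.Wf (ν : ℂ) g (xf i - xf j) := by
          rw [Finset.prod_mul_distrib, Finset.prod_const]
      _ = e * ∏ i ∈ I, ∏ j ∈ Iᶜ, RuijAux.Wf (ν : ℂ) g (xf i - xf j) := by
          rw [hIc, hIcard, ← pow_mul, hedef]
  -- assemble
  rw [ruijSum, Finset.sum_sub_distrib]
  have hsum1 : ∑ I ∈ Finset.powersetCard k (Finset.univ : Finset (Fin n)),
      (∏ i ∈ I, ∏ j ∈ Iᶜ,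
        (fun z => Complex.exp (α * z) * (z + (ν : ℂ)) / ((ν : ℂ) * z)) ((x j : ℂ) - (x i : ℂ)) *
        (fun z => Complex.exp (α * z) * (z + (ν : ℂ)) / ((ν : ℂ) * z))
          ((x i : ℂ) - (x j : ℂ) - Complex.I * (β : ℂ)))
      = e * RuijAux.Asum (ν : ℂ) g xf Finset.univ k := by
    rw [RuijAux.Asum, Finset.mul_sum]
    exact Finset.sum_congr rfl hWterm
  have hsum2 : ∑ I ∈ Finset.powersetCard k (Finset.univ : Finset (Fin n)),
      (∏ i ∈ I, ∏ j ∈ Iᶜ,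
        (fun z => Complex.exp (α * z) * (z + (ν : ℂ)) / ((ν : ℂ) * z)) ((x i : ℂ) - (x j : ℂ)) *
        (fun z => Complex.exp (α * z) * (z + (ν : ℂ)) / ((ν : ℂ) * z))
          ((x j : ℂ) - (x i : ℂ) - Complex.I * (β : ℂ)))
      = e * RuijAux.Asum (ν : ℂ) g xf Finset.univ (n - k) := by
    rw [RuijAux.Asum, Finset.mul_sum]
    rw [Finset.sum_congr rfl hWterm']
    rw [← Finset.mul_sum, ← Finset.mul_sum]
    congr 1
    refine Finset.sum_nbij' (fun I => Iᶜ) (fun J => Jᶜ) ?_ ?_ ?_ ?_ ?_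
    · intro I hI
      rw [Finset.mem_powersetCard_univ, Finset.card_compl,
        Finset.mem_powersetCard_univ.1 hI, Fintype.card_fin]
    · intro J hJ
      rw [Finset.mem_powersetCard_univ, Finset.card_compl,
        Finset.mem_powersetCard_univ.1 hJ, Fintype.card_fin]
      omega
    · intro I _; exact compl_compl I
    · intro J _; exact compl_compl J
    · intro I hI
      show _ = RuijAux.cC (ν : ℂ) g xf Finset.univ Iᶜ
      rw [RuijAux.cC]
      have hcompl : Finset.univ \ Iᶜ = I := by
        rw [← Finset.compl_eq_univ_sdiff, compl_compl]
      rw [hcompl]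
      exact Finset.prod_comm
  rw [hsum1, hsum2, hmain, sub_self]
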